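/- Let g : ℤ → ℝ be the Wiener-class limit of the iteration, i.e. lim_{k→∞} ∑_{n∈ℤ} |(g_k)_n − g_n| = 0. Let G be a semi-infinite matrix with G_{ij} ≥ 0 and ∑_{j≥1} G_{ij} = 1 for every i ≥ 1 (G is stochastic). If G − T(g) has the decay property, then ∑_{n∈ℤ} g_n = 1 and a_{−1}(1) ≥ a_1(1), where a_i(1) := a_{i,−1} + a_{i,0} + a_{i,1}. -/
import Mathlib


open Filter Topology

/- Convention: the transition probabilities a_{i,j} (i,j ∈ {−1,0,1}) are encoded
as `v : Fin 3 → Fin 3 → ℝ`, where the index `0, 1, 2` corresponds to `−1, 0, 1`. -/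

/-- The finitely supported two-sided sequence with values `c 0, c 1, c 2` at
indices `−1, 0, 1` and zero elsewhere. -/
noncomputable def triSeq (c : Fin 3 → ℝ) : ℤ → ℝ := fun n =>
  if n = -1 then c 0 else if n = 0 then c 1 else if n = 1 then c 2 else 0

/-- Convolution of two-sided sequences. -/
noncomputable def zconv (a b : ℤ → ℝ) : ℤ → ℝ := fun n => ∑' k : ℤ, a k * b (n - k)

/-- The iteration g_0 = 0, g_{k+1} = a_{−1} + a_0 ⋆ g_k + a_1 ⋆ g_k ⋆ g_k. -/
noncomputable def gIter (am1 a0 a1 : ℤ → ℝ) : ℕ → ℤ → ℝ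
  | 0 => fun _ => 0
  | k + 1 => fun n =>
      am1 n + zconv a0 (gIter am1 a0 a1 k) n +
        zconv a1 (zconv (gIter am1 a0 a1 k) (gIter am1 a0 a1 k)) n

/-- The semi-infinite Toeplitz matrix associated with a two-sided sequence:
`T(a)_{ij} = a_{j−i}`. -/
noncomputable def Toep (a : ℤ → ℝ) : ℕ → ℕ → ℝ := fun i j => a ((j : ℤ) - (i : ℤ))

/-- `A` has the decay property: all row sums are finite and tend to zero. -/
def HasDecay (A : ℕ → ℕ → ℝ) : Prop :=
  (∀ i, Summable fun j => |A i j|) ∧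
    Tendsto (fun i => ∑' j, |A i j|) atTop (𝓝 0)

/- Auxiliary material -/

def convEquiv : ℤ × ℤ ≃ ℤ × ℤ where
  toFun p := (p.2 + p.1, p.1)
  invFun p := (p.2, p.1 - p.2)
  left_inv p := by simp
  right_inv p := by simp

lemma zconv_spec {a b : ℤ → ℝ} (ha : ∀ n, 0 ≤ a n) (hb : ∀ n, 0 ≤ b n)
    (hsa : Summable a) (hsb : Summable b) :
    Summable (zconv a b) ∧ (∀ n, 0 ≤ zconv a b n) ∧
      (∑' n, zconv a b n) = (∑' n, a n) * (∑' n, b n) := by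
  set F : ℤ × ℤ → ℝ := fun p => a p.2 * b (p.1 - p.2) with hF
  have hFnn : 0 ≤ F := fun p => mul_nonneg (ha _) (hb _)
  have hcomp : (F ∘ convEquiv) = fun p : ℤ × ℤ => a p.1 * b p.2 := by
    funext p; simp [F, convEquiv]
  have hprod : Summable fun p : ℤ × ℤ => a p.1 * b p.2 :=
    hsa.mul_of_nonneg hsb ha hb
  have hFsum : Summable F :=
    (convEquiv.summable_iff.mp (by rw [show (F ∘ ⇑convEquiv) = _ from hcomp]; exact hprod))
  have hcur := (summable_prod_of_nonneg hFnn).mp hFsum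
  have hzc : (fun n => ∑' k, F (n, k)) = zconv a b := rfl
  refine ⟨hzc ▸ hcur.2, fun n => tsum_nonneg fun k => mul_nonneg (ha _) (hb _), ?_⟩
  have h1 : ∑' p, F p = ∑' n, zconv a b n := by
    rw [Summable.tsum_prod' hFsum hcur.1]; exact tsum_congr fun n => rfl
  have h2 : ∑' p, F p = (∑' n, a n) * (∑' n, b n) := by
    rw [← convEquiv.tsum_eq F]
    rw [show (fun p : ℤ × ℤ => F (convEquiv p)) = fun p : ℤ × ℤ => a p.1 * b p.2 from hcomp]
    exact (Summable.tsum_mul_tsum hsa hsb hprod).symm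
  rw [← h1, h2]

lemma triSeq_nonneg {c : Fin 3 → ℝ} (h : ∀ j, 0 ≤ c j) : ∀ n, 0 ≤ triSeq c n := by
  intro n; unfold triSeq
  split_ifs <;> first | exact h _ | exact le_refl 0

lemma triSeq_summable (c : Fin 3 → ℝ) : Summable (triSeq c) := by
  apply summable_of_ne_finset_zero (s := ({-1, 0, 1} : Finset ℤ))
  intro n hn
  simp only [Finset.mem_insert, Finset.mem_singleton] at hn
  push_neg at hn
  simp [triSeq, hn.1, hn.2.1, hn.2.2]

lemma triSeq_tsum (c : Fin 3 → ℝ) : (∑' n, triSeq c n) = c 0 + c 1 + c 2 := by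
  rw [tsum_eq_sum (s := ({-1, 0, 1} : Finset ℤ)) (by
    intro n hn
    simp only [Finset.mem_insert, Finset.mem_singleton] at hn
    push_neg at hn
    simp [triSeq, hn.1, hn.2.1, hn.2.2])]
  norm_num [triSeq]
  ring

/-- The scalar recursion for the total masses. -/
noncomputable def sRec (α β γ : ℝ) : ℕ → ℝ
  | 0 => 0
  | k + 1 => α + β * sRec α β γ k + γ * (sRec α β γ k * sRec α β γ k)

/- STATEMENT 19 -/

theorem stmt19 (v : Fin 3 → Fin 3 → ℝ) (hnn : ∀ i j, 0 ≤ v i j)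
    (hsum : ∑ i, ∑ j, v i j = 1)
    (g : ℤ → ℝ) (hgW : Summable fun n => |g n|)
    (hglim : Tendsto
      (fun k => ∑' n : ℤ,
        |gIter (triSeq (v 0)) (triSeq (v 1)) (triSeq (v 2)) k n - g n|)
      atTop (𝓝 0))
    (G : ℕ → ℕ → ℝ) (hGnn : ∀ i j, 0 ≤ G i j)
    (hGrow : ∀ i, Summable fun j => G i j) (hGstoch : ∀ i, (∑' j, G i j) = 1)
    (hdec : HasDecay (fun i j => G i j - Toep g i j)) :
    (∑' n : ℤ, g n) = 1 ∧
      v 2 0 + v 2 1 + v 2 2 ≤ v 0 0 + v 0 1 + v 0 2 := by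
  have hg : Summable g := by
    refine Summable.of_norm ?_; simpa [Real.norm_eq_abs] using hgW
  set α := v 0 0 + v 0 1 + v 0 2 with hα
  set β := v 1 0 + v 1 1 + v 1 2 with hβ
  set γ := v 2 0 + v 2 1 + v 2 2 with hγ
  have hαβγ : α + β + γ = 1 := by
    simp only [Fin.sum_univ_three] at hsum
    rw [hα, hβ, hγ]; linarith
  have hα0 : 0 ≤ α := by
    rw [hα]; have := hnn 0 0; have := hnn 0 1; have := hnn 0 2; linarith
  have hβ0 : 0 ≤ β := by
    rw [hβ]; have := hnn 1 0; have := hnn 1 1; have := hnn 1 2; linarith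
  have hγ0 : 0 ≤ γ := by
    rw [hγ]; have := hnn 2 0; have := hnn 2 1; have := hnn 2 2; linarith
  set A := triSeq (v 0) with hAdef
  set B := triSeq (v 1) with hBdef
  set C := triSeq (v 2) with hCdef
  have hAnn : ∀ n, 0 ≤ A n := triSeq_nonneg (hnn 0)
  have hBnn : ∀ n, 0 ≤ B n := triSeq_nonneg (hnn 1)
  have hCnn : ∀ n, 0 ≤ C n := triSeq_nonneg (hnn 2)
  have hAsum : Summable A := triSeq_summable _
  have hBsum : Summable B := triSeq_summable _
  have hCsum : Summable C := triSeq_summable _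
  have hAts : (∑' n, A n) = α := triSeq_tsum _
  have hBts : (∑' n, B n) = β := triSeq_tsum _
  have hCts : (∑' n, C n) = γ := triSeq_tsum _
  -- key induction on the iteration
  have key : ∀ k, (∀ n, 0 ≤ gIter A B C k n) ∧ Summable (gIter A B C k) ∧
      (∑' n, gIter A B C k n) = sRec α β γ k := by
    intro k
    induction k with
    | zero =>
      refine ⟨fun n => le_refl 0, summable_zero, ?_⟩
      simp [gIter, sRec]
    | succ k ih =>
      obtain ⟨ihn, ihs, iht⟩ := ih
      obtain ⟨hs1, hn1, ht1⟩ := zconv_spec hBnn ihn hBsum ihs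
      obtain ⟨hs2, hn2, ht2⟩ := zconv_spec ihn ihn ihs ihs
      obtain ⟨hs3, hn3, ht3⟩ := zconv_spec hCnn hn2 hCsum hs2
      have hstep : gIter A B C (k + 1) = fun n =>
          A n + zconv B (gIter A B C k) n +
            zconv C (zconv (gIter A B C k) (gIter A B C k)) n := rfl
      refine ⟨?_, ?_, ?_⟩
      · intro n; rw [hstep]
        exact add_nonneg (add_nonneg (hAnn n) (hn1 n)) (hn3 n)
      · rw [hstep]; exact (hAsum.add hs1).add hs3
      · rw [hstep]
        have : (∑' n, (A n + zconv B (gIter A B C k) n +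
            zconv C (zconv (gIter A B C k) (gIter A B C k)) n)) =
            (∑' n, (A n + zconv B (gIter A B C k) n)) +
            (∑' n, zconv C (zconv (gIter A B C k) (gIter A B C k)) n) :=
          Summable.tsum_add (hAsum.add hs1) hs3
        rw [this, Summable.tsum_add hAsum hs1, ht1, ht3, ht2, iht, hAts, hBts, hCts]
        simp [sRec]
  -- the masses converge to ∑' g
  have hmass : Tendsto (fun k => sRec α β γ k) atTop (𝓝 (∑' n, g n)) := by
    have hsq : Tendsto (fun k => sRec α β γ k - ∑' n, g n) atTop (𝓝 0) := by
      apply squeeze_zero_norm (a := fun k => ∑' n : ℤ, |gIter A B C k n - g n|) _ hglim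
      intro k
      have hsd : Summable fun n => gIter A B C k n - g n := (key k).2.1.sub hg
      have : sRec α β γ k - ∑' n, g n = ∑' n, (gIter A B C k n - g n) := by
        rw [Summable.tsum_sub (key k).2.1 hg, (key k).2.2]
      rw [this]
      simpa [Real.norm_eq_abs] using norm_tsum_le_tsum_norm
        (by simpa [Real.norm_eq_abs] using hsd.abs : Summable fun n => ‖gIter A B C k n - g n‖)
    have := hsq.add_const (∑' n, g n)
    simpa using this
  -- g is nonnegative
  have gnn : ∀ n, 0 ≤ g n := by
    intro n
    have hpt : Tendsto (fun k => gIter A B C k n - g n) atTop (𝓝 0) := by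
      apply squeeze_zero_norm (a := fun k => ∑' m : ℤ, |gIter A B C k m - g m|) _ hglim
      intro k
      have hsd : Summable fun m => |gIter A B C k m - g m| := ((key k).2.1.sub hg).abs
      simpa [Real.norm_eq_abs] using Summable.le_tsum hsd n (fun j _ => abs_nonneg _)
    have hpt2 : Tendsto (fun k => gIter A B C k n) atTop (𝓝 (g n)) := by
      have := hpt.add_const (g n); simpa using this
    exact ge_of_tendsto hpt2 (Eventually.of_forall fun k => (key k).1 n)
  -- Part 1: ∑' g = 1
  have hinj : ∀ i : ℕ, Function.Injective (fun j : ℕ => (j : ℤ) - (i : ℤ)) := by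
    intro i x y h; simp only [sub_left_inj] at h; exact_mod_cast h
  have hrow : ∀ i : ℕ, Summable (fun j : ℕ => g ((j : ℤ) - (i : ℤ))) := fun i =>
    hg.comp_injective (hinj i)
  set r : ℕ → ℝ := fun i => ∑' j : ℕ, g ((j : ℤ) - (i : ℤ)) with hrdef
  have hrt : Tendsto r atTop (𝓝 1) := by
    have hsq : Tendsto (fun i => r i - 1) atTop (𝓝 0) := by
      apply squeeze_zero_norm (a := fun i => ∑' j, |G i j - Toep g i j|) _ hdec.2
      intro i
      have h1 : (∑' j, (G i j - Toep g i j)) = 1 - r i := by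
        simp only [Toep]
        rw [Summable.tsum_sub (hGrow i) (hrow i), hGstoch i]
      have h2 : |1 - r i| ≤ ∑' j, |G i j - Toep g i j| := by
        rw [← h1]
        simpa [Real.norm_eq_abs] using norm_tsum_le_tsum_norm
          (by simpa [Real.norm_eq_abs] using hdec.1 i :
            Summable fun j => ‖G i j - Toep g i j‖)
      calc ‖r i - 1‖ = |1 - r i| := by rw [Real.norm_eq_abs, abs_sub_comm]
        _ ≤ _ := h2
    have := hsq.add_const 1; simpa using this
  have hle : ∀ i : ℕ, r i ≤ ∑' n, g n := by
    intro i
    exact Summable.tsum_le_tsum_of_inj _ (hinj i) (fun c _ => gnn c)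
      (fun j => le_refl _) (hrow i) hg
  have h1le : (1 : ℝ) ≤ ∑' n, g n := le_of_tendsto hrt (Eventually.of_forall hle)
  have hle1 : (∑' n, g n) ≤ 1 := by
    refine Summable.tsum_le_of_sum_le hg fun s => ?_
    refine ge_of_tendsto hrt ?_
    set i₀ : ℕ := s.sup fun m => (-m).toNat with hi₀
    filter_upwards [eventually_ge_atTop i₀] with i hi
    have hmem : ∀ m ∈ s, (0 : ℤ) ≤ m + i := by
      intro m hm
      have h1 : (-m).toNat ≤ i₀ := Finset.le_sup (f := fun m : ℤ => (-m).toNat) hm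
      have h2 : (-m).toNat ≤ i := le_trans h1 hi
      have := (Int.toNat_le).mp h2
      linarith
    have hsum_eq : (∑ m ∈ s, g m) =
        ∑ j ∈ s.image (fun m => (m + (i : ℤ)).toNat), g ((j : ℤ) - (i : ℤ)) := by
      rw [Finset.sum_image (fun x hx y hy hxy => by
        have hx' := hmem x hx; have hy' := hmem y hy
        have : x + (i : ℤ) = y + (i : ℤ) := by
          rw [← Int.toNat_of_nonneg hx', ← Int.toNat_of_nonneg hy', hxy]
        linarith)]
      refine Finset.sum_congr rfl fun m hm => ?_
      congr 1
      rw [Int.toNat_of_nonneg (hmem m hm)]; ring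
    rw [hsum_eq]
    exact Summable.sum_le_tsum _ (fun j _ => gnn _) (hrow i)
  have part1 : (∑' n, g n) = 1 := le_antisymm hle1 h1le
  refine ⟨part1, ?_⟩
  -- Part 2: γ ≤ α
  rw [part1] at hmass
  by_contra hcon
  push_neg at hcon
  -- hcon : α < γ
  have hγpos : 0 < γ := lt_of_le_of_lt hα0 hcon
  have hbound : ∀ k, 0 ≤ sRec α β γ k ∧ sRec α β γ k ≤ α / γ := by
    intro k
    induction k with
    | zero => exact ⟨le_refl 0, by positivity⟩
    | succ k ih =>
      obtain ⟨h0, h1⟩ := ih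
      set s := sRec α β γ k
      constructor
      · show 0 ≤ α + β * s + γ * (s * s)
        positivity
      · show α + β * s + γ * (s * s) ≤ α / γ
        have hsγ : γ * s ≤ α := by
          have := (le_div_iff₀ hγpos).mp h1; linarith
        rw [le_div_iff₀ hγpos]
        nlinarith [mul_le_mul_of_nonneg_left hsγ hβ0,
          mul_self_le_mul_self (mul_nonneg hγ0 h0) hsγ]
  have hlim : (1 : ℝ) ≤ α / γ :=
    le_of_tendsto hmass (Eventually.of_forall fun k => (hbound k).2)
  have : γ ≤ α := by
    rw [le_div_iff₀ hγpos] at hlim; linarith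
  exact absurd hcon (not_lt.mpr this)
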